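/- arXiv:1610.02930 — 4 statements merged into one kernel-verified Lean document; each statement's English description precedes it below -/
import Mathlib

section
/- Let 1 ≤ p < q be coprime integers. A periodic symbolic sequence x ∈ W_{p,q} is maximin if and only if it is p,q-ordered. -/
/-- The shift operator on binary symbolic sequences. -/
def shift (x : ℕ → Bool) : ℕ → Bool := fun i => x (i + 1)

/-- `Wpq p q` is the set of `q`-periodic binary sequences whose fundamental block of
length `q` contains exactly `p` symbols `1` (`true`). -/
def Wpq (p q : ℕ) : Set (ℕ → Bool) :=
  {x | (∀ i, x (i + q) = x i) ∧
    ((Finset.range q).filter (fun i => x i = true)).card = p}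

/-- The lexicographic minimum of the first `q` shifts of `x` (junk value if `q = 0`). -/
noncomputable def minShift (q : ℕ) (x : ℕ → Bool) : Lex (ℕ → Bool) :=
  if h : 0 < q then
    (Finset.range q).inf' (Finset.nonempty_range_iff.mpr h.ne')
      (fun k => toLex (shift^[k] x))
  else toLex x

/-- `x` is maximin in `W_{p,q}`: the minimum of its `q` shifts is the largest such
minimum among all members of `W_{p,q}`. -/
def IsMaximin (p q : ℕ) (x : ℕ → Bool) : Prop :=
  ∀ y ∈ Wpq p q, minShift q y ≤ minShift q x

/-- `x` is `p,q`-ordered: its `q` shifts are pairwise distinct, and when the shifts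
`σ^{i_j}(x)` are listed in increasing lexicographic order, the differences
`i_j − i_{j−1}` are constant modulo `q`. -/
def IsPQOrdered (q : ℕ) (x : ℕ → Bool) : Prop :=
  (∀ k₁ < q, ∀ k₂ < q, shift^[k₁] x = shift^[k₂] x → k₁ = k₂) ∧
  ∃ (i : Fin q → Fin q) (c : ℕ), Function.Bijective i ∧
    (∀ j₁ j₂ : Fin q, j₁ < j₂ →
      toLex (shift^[(i j₁ : ℕ)] x) < toLex (shift^[(i j₂ : ℕ)] x)) ∧
    (∀ j : Fin q, ∀ hj : (j : ℕ) + 1 < q,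
      ((i ⟨(j : ℕ) + 1, hj⟩ : ℕ)) % q = ((i j : ℕ) + c) % q)

/-!
Both conditions characterise the mechanical words `mech q p r`, `r ∈ ℤ/q`. Their prefix counts
are `⌊(r + m p) / q⌋`, and prefix counts dominate the lexicographic order, so `mech q p r`
increases with `r`; its shifts are the `mech q p (r + k p)`, hence it is `p,q`-ordered and its
least shift is `mech q p 0`. Starting a sequence of `W_{p,q}` at a maximum of
`q · #1s(y[0, k)) - p k` bounds its prefix counts by `⌊m p / q⌋`, so one of its shifts lies
below `mech q p 0`: the maximin value is `mech q p 0`, attained exactly by the mechanical words.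

Conversely, for a `p,q`-ordered sequence the rank of `σ^k x` is affine in `k` with a unit slope
`d`, and the first symbol of `σ^k x` is `1` exactly for the top `p` ranks. Shifting preserves the
order of two sequences with the same first symbol; the ranks `q - d - 1 < q - d` are followed by
`q - 1 > 0`, which forces `d = p`, i.e. `x` is mechanical.
-/

open Finset Nat

theorem Monotone.eq_true_iff_sub_le {n p : ℕ} {f : Fin n → Bool} (hf : Monotone f)
    (hcard : #{j | f j = true} = p) (j : Fin n) : f j = true ↔ n - p ≤ j := by
  constructor
  · intro hj
    have hsub : Ici j ⊆ ({i | f i = true} : Finset _) := fun i hi => by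
      simpa using le_antisymm (Bool.le_true _) (hj ▸ hf (mem_Ici.mp hi))
    have := card_le_card hsub
    rw [Fin.card_Ici, hcard] at this
    omega
  · intro hj
    by_contra hfj
    rw [Bool.not_eq_true] at hfj
    have hsub : Iic j ⊆ ({i | f i = false} : Finset _) := fun i hi => by
      simpa using Bool.eq_false_of_le_false (hfj ▸ hf (mem_Iic.mp hi))
    have := card_le_card hsub
    have hsplit := card_filter_add_card_filter_not (s := univ) (p := fun i => f i = true)
    simp only [Bool.not_eq_true] at hsplit
    rw [Fin.card_Iic] at this
    rw [hcard, Finset.card_univ, Fintype.card_fin] at hsplit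
    omega

namespace Maximin

section Sequences

variable {q : ℕ} {x y z : ℕ → Bool}

theorem shift_iterate_apply (x : ℕ → Bool) (k i : ℕ) : shift^[k] x i = x (i + k) := by
  induction k generalizing x with
  | zero => rfl
  | succ k ih => rw [Function.iterate_succ_apply, ih, shift, add_assoc]

theorem shift_iterate_mod (hx : Function.Periodic x q) (k : ℕ) :
    shift^[k % q] x = shift^[k] x := by
  funext i
  rw [shift_iterate_apply, shift_iterate_apply, ← hx.map_mod_nat, Nat.add_mod_mod,
    hx.map_mod_nat]

theorem shift_iterate_period (hx : Function.Periodic x q) : shift^[q] x = x :=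
  funext fun i => (shift_iterate_apply x q i).trans (hx i)

theorem head_le_of_toLex_lt (h : toLex y < toLex z) : y 0 ≤ z 0 := by
  obtain ⟨i, hbelow, hi⟩ := h
  rcases Nat.eq_zero_or_pos i with rfl | hi0
  · exact hi.le
  · exact (hbelow 0 hi0).le

theorem toLex_shift_lt_of_head_eq (h0 : y 0 = z 0) (h : toLex y < toLex z) :
    toLex (shift y) < toLex (shift z) := by
  obtain ⟨i, hbelow, hi⟩ := h
  obtain ⟨i, rfl⟩ : ∃ j, i = j + 1 :=
    Nat.exists_eq_add_one.mpr (Nat.pos_of_ne_zero fun h => by subst h; exact hi.ne h0)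
  exact ⟨i, fun j hj => hbelow (j + 1) (by omega), hi⟩

theorem toLex_le_of_count_le
    (h : ∀ m, count (y · = true) m ≤ count (z · = true) m) : toLex y ≤ toLex z := by
  refine not_lt.mp fun hlt => ?_
  obtain ⟨j, hbelow, hj⟩ : ∃ j, (∀ i < j, z i = y i) ∧ z j < y j := hlt
  obtain ⟨hzj, hyj⟩ := Bool.lt_iff.mp hj
  have hagree : count (z · = true) j = count (y · = true) j :=
    le_antisymm (count_mono_left fun i hi => by rw [hbelow i hi]; exact id)
      (count_mono_left fun i hi => by rw [hbelow i hi]; exact id)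
  have := h (j + 1)
  simp [count_succ, hzj, hyj, hagree] at this

theorem count_add_period {p : ℕ} (hy : y ∈ Wpq p q) (k : ℕ) :
    count (y · = true) (k + q) = count (y · = true) k + p := by
  rw [add_comm, count_add, count_eq_card_filter_range, hy.2, add_comm]
  simp only [add_comm q, hy.1]

theorem count_add_eq_count_add_count_shift (y : ℕ → Bool) (k m : ℕ) :
    count (y · = true) (k + m) = count (y · = true) k + count (shift^[k] y · = true) m := by
  rw [count_add]
  simp only [shift_iterate_apply, Nat.add_comm _ k]

theorem exists_count_shift_le {p : ℕ} (hq : 0 < q) (hy : y ∈ Wpq p q) :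
    ∃ k < q, ∀ m, q * count (shift^[k] y · = true) m ≤ p * m := by
  set f : ℕ → ℤ := fun k => q * count (y · = true) k - p * k
  have hf : Function.Periodic f q := fun k => by
    simp only [f, count_add_period hy]
    push_cast
    ring
  obtain ⟨k, hk, hmax⟩ := (range q).exists_max_image f ⟨0, mem_range.mpr hq⟩
  refine ⟨k, mem_range.mp hk, fun m => ?_⟩
  have hle := hmax _ (mem_range.mpr (Nat.mod_lt (k + m) hq))
  rw [hf.map_mod_nat] at hle
  simp only [f, count_add_eq_count_add_count_shift y k m] at hle
  push_cast at hle
  zify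
  linarith

end Sequences

section MinShift

variable {q : ℕ} {x : ℕ → Bool}

theorem minShift_le {k : ℕ} (hk : k < q) : minShift q x ≤ toLex (shift^[k] x) := by
  rw [minShift, dif_pos (by omega)]
  exact inf'_le _ (mem_range.mpr hk)

theorem le_minShift (hq : 0 < q) {a : Lex (ℕ → Bool)} (h : ∀ k < q, a ≤ toLex (shift^[k] x)) :
    a ≤ minShift q x := by
  rw [minShift, dif_pos hq]
  exact le_inf' _ _ fun k hk => h k (mem_range.mp hk)

theorem exists_minShift_eq (hq : 0 < q) : ∃ k < q, minShift q x = toLex (shift^[k] x) := by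
  rw [minShift, dif_pos hq]
  obtain ⟨k, hk, heq⟩ :=
    exists_mem_eq_inf' (nonempty_range_iff.mpr hq.ne') fun k => toLex (shift^[k] x)
  exact ⟨k, mem_range.mp hk, heq⟩

end MinShift

/-- The mechanical word of slope `p / q` and intercept `r`: its `i`-th symbol is
`⌊(r + (i + 1) p) / q⌋ - ⌊(r + i p) / q⌋`. -/
def mech (q p : ℕ) (r : ZMod q) : ℕ → Bool := fun i => decide (q - p ≤ (r + i * p).val)

theorem shift_iterate_mech {q p : ℕ} (r : ZMod q) (k : ℕ) :
    shift^[k] (mech q p r) = mech q p (r + k * p) := by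
  funext i
  simp only [shift_iterate_apply, mech]
  push_cast
  ring_nf

section Mechanical

variable {p q : ℕ} [NeZero q]

theorem exists_add_mul_eq {d : ZMod q} (hd : IsUnit d) (s t : ZMod q) :
    ∃ k < q, s + k * d = t := by
  refine ⟨((t - s) * ↑hd.unit⁻¹).val, ZMod.val_lt _, ?_⟩
  rw [ZMod.natCast_zmod_val]
  linear_combination (t - s) * hd.val_inv_mul

theorem count_mech (hpq : p < q) (r : ZMod q) (m : ℕ) :
    count (mech q p r · = true) m = (r.val + m * p) / q := by
  induction m with
  | zero => simp [Nat.div_eq_of_lt (ZMod.val_lt r)]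
  | succ m ih =>
    have hval : (r + m * p).val = (r.val + m * p) % q := by
      rw [← ZMod.val_natCast]
      push_cast [ZMod.natCast_zmod_val]
      rfl
    rw [count_succ, ih, add_one_mul, ← add_assoc,
      Nat.add_div (a := r.val + m * p) (NeZero.pos q), Nat.div_eq_of_lt hpq, Nat.mod_eq_of_lt hpq]
    simp only [mech, hval, decide_eq_true_eq]
    split_ifs <;> omega

theorem mech_mem_Wpq (hpq : p < q) (r : ZMod q) : mech q p r ∈ Wpq p q := by
  refine ⟨fun i => by simp [mech], ?_⟩
  rw [← count_eq_card_filter_range, count_mech hpq, Nat.mul_comm q p,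
    Nat.add_mul_div_right _ _ (NeZero.pos q), Nat.div_eq_of_lt (ZMod.val_lt r), zero_add]

theorem toLex_mech_le (hpq : p < q) {s t : ZMod q} (h : s.val ≤ t.val) :
    toLex (mech q p s) ≤ toLex (mech q p t) :=
  toLex_le_of_count_le fun m => by
    rw [count_mech hpq, count_mech hpq]
    exact Nat.div_le_div_right (by omega)

theorem toLex_mech_lt (hpq : p < q) (hcop : p.Coprime q) {s t : ZMod q} (h : s.val < t.val) :
    toLex (mech q p s) < toLex (mech q p t) := by
  refine (toLex_mech_le hpq h.le).lt_of_ne fun heq => ?_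
  obtain ⟨m, -, hm⟩ := exists_add_mul_eq ((ZMod.isUnit_iff_coprime p q).mpr hcop) t 0
  have hdvd : q ∣ t.val + m * p := by
    rw [← ZMod.natCast_eq_zero_iff]
    push_cast [ZMod.natCast_zmod_val]
    exact hm
  have hcount : count (mech q p s · = true) m = count (mech q p t · = true) m := by
    rw [toLex.injective heq]
  rw [count_mech hpq, count_mech hpq] at hcount
  exact (Nat.div_lt_div_of_lt_of_dvd hdvd (by omega)).ne hcount

theorem mech_injective (hpq : p < q) (hcop : p.Coprime q) : Function.Injective (mech q p) := by
  intro s t heq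
  rcases lt_trichotomy s.val t.val with h | h | h
  · exact absurd (congrArg toLex heq) (toLex_mech_lt hpq hcop h).ne
  · exact ZMod.val_injective q h
  · exact absurd (congrArg toLex heq) (toLex_mech_lt hpq hcop h).ne'

theorem minShift_mech (hpq : p < q) (hcop : p.Coprime q) (r : ZMod q) :
    minShift q (mech q p r) = toLex (mech q p 0) := by
  refine le_antisymm ?_ (le_minShift (NeZero.pos q) fun k _ => ?_)
  · obtain ⟨k, hk, hr⟩ := exists_add_mul_eq ((ZMod.isUnit_iff_coprime p q).mpr hcop) r 0
    have hmin := minShift_le (x := mech q p r) hk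
    rwa [shift_iterate_mech, hr] at hmin
  · rw [shift_iterate_mech]
    exact toLex_mech_le hpq (by simp)

theorem exists_shift_le_mech_zero (hpq : p < q) {y : ℕ → Bool} (hy : y ∈ Wpq p q) :
    ∃ k < q, toLex (shift^[k] y) ≤ toLex (mech q p 0) := by
  obtain ⟨k, hk, hcount⟩ := exists_count_shift_le (NeZero.pos q) hy
  refine ⟨k, hk, toLex_le_of_count_le fun m => ?_⟩
  rw [count_mech hpq, ZMod.val_zero, zero_add, Nat.le_div_iff_mul_le (NeZero.pos q),
    Nat.mul_comm, Nat.mul_comm m]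
  exact hcount m

theorem isMaximin_iff_exists_eq_mech (hpq : p < q) (hcop : p.Coprime q) {x : ℕ → Bool}
    (hx : x ∈ Wpq p q) : IsMaximin p q x ↔ ∃ r, x = mech q p r := by
  have hbound : ∀ y ∈ Wpq p q, minShift q y ≤ toLex (mech q p 0) := fun y hy => by
    obtain ⟨k, hk, hle⟩ := exists_shift_le_mech_zero hpq hy
    exact (minShift_le hk).trans hle
  constructor
  · intro hmax
    have hmin : minShift q x = toLex (mech q p 0) :=
      (hbound x hx).antisymm (minShift_mech hpq hcop 0 ▸ hmax _ (mech_mem_Wpq hpq 0))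
    obtain ⟨k, hk, hxk⟩ := exists_minShift_eq (x := x) (NeZero.pos q)
    have hshift : shift^[k] x = mech q p 0 := toLex.injective (hxk ▸ hmin)
    refine ⟨((q - k : ℕ) : ZMod q) * p, ?_⟩
    calc x = shift^[q - k] (shift^[k] x) := by
          rw [← Function.iterate_add_apply, Nat.sub_add_cancel hk.le, shift_iterate_period hx.1]
      _ = _ := by rw [hshift, shift_iterate_mech, zero_add]
  · rintro ⟨r, rfl⟩ y hy
    rw [minShift_mech hpq hcop r]
    exact hbound y hy

theorem isPQOrdered_mech (hpq : p < q) (hcop : p.Coprime q) (r : ZMod q) :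
    IsPQOrdered q (mech q p r) := by
  have hunit := (ZMod.isUnit_iff_coprime p q).mpr hcop
  set u : ZMod q := ↑hunit.unit⁻¹
  let I : Fin q → Fin q := fun j => ⟨(((j : ℕ) - r) * u).val, ZMod.val_lt _⟩
  have hI : ∀ j, shift^[I j] (mech q p r) = mech q p (j : ℕ) := fun j => by
    rw [shift_iterate_mech, ZMod.natCast_zmod_val]
    congr 1
    linear_combination ((j : ℕ) - r) * hunit.val_inv_mul
  have hmono : StrictMono fun j => toLex (shift^[I j] (mech q p r)) := fun j₁ j₂ h => by
    simp only [hI]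
    exact toLex_mech_lt hpq hcop (by simpa [ZMod.val_natCast, Nat.mod_eq_of_lt] using h)
  refine ⟨fun k₁ hk₁ k₂ hk₂ heq => ?_, I, u.val,
    Finite.injective_iff_bijective.mp fun j₁ j₂ h => hmono.injective (by simp only [h]),
    hmono, fun j hj => (ZMod.natCast_eq_natCast_iff' _ _ q).mp ?_⟩
  · rw [shift_iterate_mech, shift_iterate_mech] at heq
    have hk := hunit.mul_right_cancel (add_left_cancel (mech_injective hpq hcop heq))
    rwa [ZMod.natCast_eq_natCast_iff', Nat.mod_eq_of_lt hk₁, Nat.mod_eq_of_lt hk₂] at hk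
  · simp only [I]
    push_cast [ZMod.natCast_zmod_val]
    ring

end Mechanical

section Ordered

variable {p q : ℕ} {x : ℕ → Bool}

theorem natCast_apply_eq_add_mul {I : Fin q → Fin q} {c : ℕ} (hq : 0 < q)
    (hgap : ∀ j : Fin q, ∀ hj : (j : ℕ) + 1 < q,
      (I ⟨j + 1, hj⟩ : ℕ) % q = ((I j : ℕ) + c) % q)
    (j : Fin q) : ((I j : ℕ) : ZMod q) = (I ⟨0, hq⟩ : ℕ) + (j : ℕ) * c := by
  obtain ⟨j, hj⟩ := j
  induction j with
  | zero => simp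
  | succ j ih =>
    rw [(ZMod.natCast_eq_natCast_iff' _ _ q).mpr (hgap ⟨j, by omega⟩ hj)]
    push_cast [ih (by omega)]
    ring

theorem head_eq_decide_of_strictMono (hx : x ∈ Wpq p q) {I : Fin q → Fin q}
    (hI : Function.Bijective I) (hmono : StrictMono fun j => toLex (shift^[(I j : ℕ)] x))
    (j : Fin q) : x (I j) = decide (q - p ≤ j) := by
  have hf : Monotone fun j => x (I j) := fun j₁ j₂ h => by
    rcases h.eq_or_lt with rfl | h
    · exact le_rfl
    · simpa [shift_iterate_apply] using head_le_of_toLex_lt (hmono h)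
  have hcard : #{j | x (I j) = true} = p := by
    rw [card_filter, Fintype.sum_bijective I hI _ (fun k => if x k = true then 1 else 0)
      fun _ => rfl, Fin.sum_univ_eq_sum_range (fun k => if x k = true then 1 else 0) q,
      ← card_filter, hx.2]
  exact Bool.eq_iff_iff.mpr (by simpa using Monotone.eq_true_iff_sub_le hf hcard j)

theorem exists_rank_of_isPQOrdered [NeZero q] (hx : x ∈ Wpq p q) (h : IsPQOrdered q x) :
    ∃ (ρ : ℕ → ℕ) (i₀ c : ZMod q), (∀ k, ρ k < q) ∧ (∀ k : ℕ, (k : ZMod q) = i₀ + ρ k * c) ∧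
      (∀ k, x k = decide (q - p ≤ ρ k)) ∧
      ∀ a b, ρ a < ρ b → toLex (shift^[a] x) < toLex (shift^[b] x) := by
  obtain ⟨-, I, c, hI, hmono, hgap⟩ := h
  have hq := NeZero.pos q
  set E := Equiv.ofBijective I hI
  have hIE (k : ℕ) : (I (E.symm ⟨k % q, Nat.mod_lt k hq⟩) : ℕ) = k % q :=
    congrArg Fin.val (E.apply_symm_apply _)
  refine ⟨fun k => E.symm ⟨k % q, Nat.mod_lt k hq⟩, (I ⟨0, hq⟩ : ℕ), c, fun k => Fin.isLt _,
    fun k => ?_, fun k => ?_, fun a b hab => ?_⟩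
  · rw [← ZMod.natCast_mod k q, ← hIE, natCast_apply_eq_add_mul hq hgap]
  · rw [← Function.Periodic.map_mod_nat hx.1, ← hIE,
      head_eq_decide_of_strictMono hx hI hmono]
  · have := hmono _ _ hab
    rwa [hIE, hIE, shift_iterate_mod hx.1, shift_iterate_mod hx.1] at this

theorem exists_val_eq_of_natCast_eq [NeZero q] {ρ : ℕ → ℕ} (hρ : ∀ k, ρ k < q) {i₀ c : ZMod q}
    (h : ∀ k : ℕ, (k : ZMod q) = i₀ + ρ k * c) :
    ∃ r d : ZMod q, IsUnit d ∧ ∀ k, ρ k = (r + k * d).val := by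
  set d : ZMod q := (ρ (i₀ + 1).val : ZMod q)
  have hdc : d * c = 1 := by
    have := h (i₀ + 1).val
    rw [ZMod.natCast_zmod_val] at this
    linear_combination -this
  refine ⟨-i₀ * d, d, IsUnit.of_mul_eq_one _ hdc, fun k => ?_⟩
  have hρk : (ρ k : ZMod q) = -i₀ * d + k * d := by
    rw [h k]
    linear_combination -(ρ k : ZMod q) * hdc
  rw [← hρk, ZMod.val_natCast, Nat.mod_eq_of_lt (hρ k)]

theorem eq_natCast_of_rank_affine [Fact (1 < q)] (hpq : p < q) {r d : ZMod q} (hd : IsUnit d)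
    (hx : ∀ k, x k = decide (q - p ≤ (r + k * d).val))
    (hlt : ∀ a b : ℕ, (r + a * d).val < (r + b * d).val →
      toLex (shift^[a] x) < toLex (shift^[b] x)) :
    d = p := by
  -- `a` and `b` have the consecutive ranks `q - d - 1` and `q - d`, their successors the ranks
  -- `q - 1` and `0`
  obtain ⟨a, -, ha⟩ := exists_add_mul_eq hd r (-d - 1)
  obtain ⟨b, -, hb⟩ := exists_add_mul_eq hd r (-d)
  have ha' : r + ((a + 1 : ℕ) : ZMod q) * d = -1 := by push_cast; linear_combination ha
  have hb' : r + ((b + 1 : ℕ) : ZMod q) * d = 0 := by push_cast; linear_combination hb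
  have hnd : 1 ≤ (-d).val := ZMod.val_pos.mpr (neg_ne_zero.mpr hd.ne_zero)
  have hva : (-d - 1).val = (-d).val - 1 := by
    rw [ZMod.val_sub (by rwa [ZMod.val_one]), ZMod.val_one]
  have hab := hlt a b (by rw [ha, hb, hva]; omega)
  have hba := hlt (b + 1) (a + 1) (by
    rw [ha', hb', ZMod.val_zero]; exact ZMod.val_pos.mpr (neg_ne_zero.mpr one_ne_zero))
  have hhead : x a ≠ x b := fun heq => by
    have := toLex_shift_lt_of_head_eq (by simpa [shift_iterate_apply] using heq) hab
    rw [← Function.iterate_succ_apply' shift a x, ← Function.iterate_succ_apply' shift b x]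
      at this
    exact lt_asymm this hba
  have hle : x a ≤ x b := by simpa [shift_iterate_apply] using head_le_of_toLex_lt hab
  obtain ⟨hxa, hxb⟩ : x a = false ∧ x b = true := by
    revert hhead hle; cases x a <;> cases x b <;> decide
  rw [hx, ha, hva] at hxa
  rw [hx, hb] at hxb
  simp only [decide_eq_false_iff_not, decide_eq_true_eq] at hxa hxb
  have hval : (-d).val = q - p := by omega
  rw [← neg_neg d, ← ZMod.natCast_zmod_val (-d), hval, Nat.cast_sub hpq.le, ZMod.natCast_self]
  ring

theorem exists_eq_mech_of_isPQOrdered [Fact (1 < q)] (hpq : p < q) (hx : x ∈ Wpq p q)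
    (h : IsPQOrdered q x) : ∃ r, x = mech q p r := by
  obtain ⟨ρ, i₀, c, hρq, hρ, hxρ, hρlt⟩ := exists_rank_of_isPQOrdered hx h
  obtain ⟨r, d, hd, hρrd⟩ := exists_val_eq_of_natCast_eq hρq hρ
  simp only [hρrd] at hxρ hρlt
  obtain rfl := eq_natCast_of_rank_affine hpq hd hxρ hρlt
  exact ⟨r, funext hxρ⟩

end Ordered

end Maximin

/-- A sequence `x ∈ W_{p,q}` with `1 ≤ p < q` coprime is maximin iff it is `p,q`-ordered. -/
theorem maximin_iff_pq_ordered (p q : ℕ) (hp : 1 ≤ p) (hpq : p < q)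
    (hcop : Nat.Coprime p q) (x : ℕ → Bool) (hx : x ∈ Wpq p q) :
    IsMaximin p q x ↔ IsPQOrdered q x := by
  have : Fact (1 < q) := ⟨by omega⟩
  rw [Maximin.isMaximin_iff_exists_eq_mech hpq hcop hx]
  exact ⟨fun ⟨r, hr⟩ => hr ▸ Maximin.isPQOrdered_mech hpq hcop r,
    Maximin.exists_eq_mech_of_isPQOrdered hpq hx⟩
end

section
/- Let τ_θ > 1, let θ_∞ : ℝ → ℝ be Lipschitz with constant L ≥ 0, let A ∈ ℝ, and let (V₁, θ₁) and (V₂, θ₂) be two solutions on [0,∞) of the system V' = −V + V₀ + A, τ_θ θ' = −θ + θ_∞(V). Then for all t ≥ 0: |V₁(t) − V₂(t)| = e^{−t}·|V₁(0) − V₂(0)| and |θ₁(t) − θ₂(t)| ≤ e^{−t/τ_θ}·( |θ₁(0) − θ₂(0)| + (L/(τ_θ − 1))·|V₁(0) − V₂(0)| ). -/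
/-!
The potential difference solves `w' = -w`, so it decays exactly like `e^{-t}`. The threshold
difference `δ` solves `τ δ' = -δ + (θ_∞(V₁) - θ_∞(V₂))`, a linear equation with intrinsic rate
`1/τ` whose forcing is at most `L e^{-t} |V₁(0) - V₂(0)|` by the Lipschitz bound. After the
integrating factor `e^{t/τ}` the derivative is bounded by a multiple of `e^{-(1 - 1/τ) t}`, which is
integrable on `[0, ∞)` because `τ > 1`; its total integral is `L |V₁(0) - V₂(0)| / (τ - 1)`.
-/

open Real Set

theorem eq_exp_mul_of_hasDerivAt_mul_self {c : ℝ} {f : ℝ → ℝ}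
    (hf : ∀ t, 0 ≤ t → HasDerivAt f (c * f t) t) {t : ℝ} (ht : 0 ≤ t) :
    f t = exp (c * t) * f 0 := by
  have hconst : ∀ s, 0 ≤ s → HasDerivAt (fun s => exp (-c * s) * f s) 0 s := fun s hs =>
    (((hasDerivAt_id' s).const_mul (-c)).exp.fun_mul (hf s hs)).congr_deriv (by ring)
  have := constant_of_has_deriv_right_zero
    (fun s hs => (hconst s hs.1).continuousAt.continuousWithinAt)
    (fun s hs => (hconst s hs.1).hasDerivWithinAt) t ⟨ht, le_rfl⟩
  rw [mul_zero, exp_zero, one_mul, neg_mul, exp_neg] at this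
  rw [← this, ← mul_assoc, mul_inv_cancel₀ (exp_pos _).ne', one_mul]

theorem abs_le_exp_mul_of_hasDerivAt_of_abs_le {a μ C : ℝ} (haμ : a < μ) {δ u : ℝ → ℝ}
    (hδ : ∀ t, 0 ≤ t → HasDerivAt δ (-a * δ t + u t) t)
    (hu : ∀ t, 0 ≤ t → |u t| ≤ C * exp (-μ * t)) {t : ℝ} (ht : 0 ≤ t) :
    |δ t| ≤ exp (-a * t) * (|δ 0| + C / (μ - a)) := by
  have hμa : 0 < μ - a := sub_pos.mpr haμ
  have hC : 0 ≤ C := by simpa using (abs_nonneg _).trans (hu 0 le_rfl)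
  have hg : ∀ s, 0 ≤ s → HasDerivAt (fun s => exp (a * s) * δ s) (exp (a * s) * u s) s :=
    fun s hs => (((hasDerivAt_id' s).const_mul a).exp.fun_mul (hδ s hs)).congr_deriv (by ring)
  -- `|δ 0|` plus the integral over `[0, s]` of the bound `hbound` on the derivative.
  have hB : ∀ s, HasDerivAt (fun s => |δ 0| + C / (μ - a) * (1 - exp ((a - μ) * s)))
      (C * exp ((a - μ) * s)) s := fun s =>
    ((((hasDerivAt_id' s).const_mul (a - μ)).exp.const_sub 1).const_mul (C / (μ - a))
      |>.const_add |δ 0|).congr_deriv (by field_simp; ring)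
  have hbound : ∀ s, 0 ≤ s → |exp (a * s) * u s| ≤ C * exp ((a - μ) * s) := fun s hs =>
    calc |exp (a * s) * u s| = exp (a * s) * |u s| := by rw [abs_mul, abs_of_pos (exp_pos _)]
      _ ≤ exp (a * s) * (C * exp (-μ * s)) := by gcongr; exact hu s hs
      _ = C * exp ((a - μ) * s) := by rw [sub_mul, sub_eq_add_neg, exp_add, ← neg_mul]; ring
  have key := image_norm_le_of_norm_deriv_right_le_deriv_boundary
    (fun s hs => (hg s hs.1).continuousAt.continuousWithinAt)
    (fun s hs => (hg s hs.1).hasDerivWithinAt) (by simp) hB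
    (fun s hs => hbound s hs.1) ⟨ht, le_rfl⟩
  rw [Real.norm_eq_abs, abs_mul, abs_of_pos (exp_pos _)] at key
  rw [neg_mul, exp_neg, inv_mul_eq_div, le_div_iff₀' (exp_pos _)]
  refine key.trans ?_
  have : 0 ≤ C / (μ - a) * exp ((a - μ) * t) := by positivity
  linarith

theorem threshold_model_contraction_general (τ V₀ A L : ℝ) (hτ : 1 < τ)
    (θinf : ℝ → ℝ) (hLip : ∀ a b : ℝ, |θinf a - θinf b| ≤ L * |a - b|)
    (V₁ θ₁ V₂ θ₂ : ℝ → ℝ)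
    (hV₁ : ∀ t : ℝ, 0 ≤ t → HasDerivAt V₁ (-V₁ t + V₀ + A) t)
    (hθ₁ : ∀ t : ℝ, 0 ≤ t → HasDerivAt θ₁ ((-θ₁ t + θinf (V₁ t)) / τ) t)
    (hV₂ : ∀ t : ℝ, 0 ≤ t → HasDerivAt V₂ (-V₂ t + V₀ + A) t)
    (hθ₂ : ∀ t : ℝ, 0 ≤ t → HasDerivAt θ₂ ((-θ₂ t + θinf (V₂ t)) / τ) t) :
    ∀ t : ℝ, 0 ≤ t →
      |V₁ t - V₂ t| = exp (-t) * |V₁ 0 - V₂ 0| ∧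
      |θ₁ t - θ₂ t| ≤ exp (-t / τ) * (|θ₁ 0 - θ₂ 0| + L / (τ - 1) * |V₁ 0 - V₂ 0|) := by
  have hτ₀ : 0 < τ := by linarith
  have hΔV : ∀ t, 0 ≤ t → |V₁ t - V₂ t| = exp (-t) * |V₁ 0 - V₂ 0| := fun t ht => by
    rw [eq_exp_mul_of_hasDerivAt_mul_self (c := -1) (f := fun s => V₁ s - V₂ s)
      (fun s hs => ((hV₁ s hs).fun_sub (hV₂ s hs)).congr_deriv (by ring)) ht,
      abs_mul, abs_of_pos (exp_pos _), neg_one_mul]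
  have hforcing : ∀ s, 0 ≤ s → |(θinf (V₁ s) - θinf (V₂ s)) / τ| ≤
      L * |V₁ 0 - V₂ 0| / τ * exp (-1 * s) := fun s hs =>
    calc |(θinf (V₁ s) - θinf (V₂ s)) / τ| = |θinf (V₁ s) - θinf (V₂ s)| / τ := by
          rw [abs_div, abs_of_pos hτ₀]
      _ ≤ L * |V₁ s - V₂ s| / τ := by gcongr; exact hLip _ _
      _ = L * |V₁ 0 - V₂ 0| / τ * exp (-1 * s) := by rw [hΔV s hs, neg_one_mul]; ring
  intro t ht
  refine ⟨hΔV t ht, ?_⟩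
  have hΔθ := abs_le_exp_mul_of_hasDerivAt_of_abs_le (δ := fun s => θ₁ s - θ₂ s)
    ((div_lt_one hτ₀).mpr hτ)
    (fun s hs => ((hθ₁ s hs).fun_sub (hθ₂ s hs)).congr_deriv (by ring)) hforcing ht
  have hτ₁ : τ - 1 ≠ 0 := by linarith
  refine hΔθ.trans_eq ?_
  field_simp

/-- Contraction estimates for the threshold model with constant input `A`:
if `τ_θ > 1` and `θ_∞` is `L`-Lipschitz, then any two solutions `(V₁,θ₁)`, `(V₂,θ₂)` of
`V' = −V + V₀ + A`, `τ_θ θ' = −θ + θ_∞(V)` on `[0,∞)` satisfy, for all `t ≥ 0`,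
`|V₁(t) − V₂(t)| = e^{−t}|V₁(0) − V₂(0)|` and
`|θ₁(t) − θ₂(t)| ≤ e^{−t/τ_θ}(|θ₁(0) − θ₂(0)| + (L/(τ_θ−1))|V₁(0) − V₂(0)|)`. -/
theorem threshold_model_contraction (τ V₀ A L : ℝ) (hτ : 1 < τ) (hL : 0 ≤ L)
    (θinf : ℝ → ℝ) (hLip : ∀ a b : ℝ, |θinf a - θinf b| ≤ L * |a - b|)
    (V₁ θ₁ V₂ θ₂ : ℝ → ℝ)
    (hV₁ : ∀ t : ℝ, 0 ≤ t → HasDerivAt V₁ (-V₁ t + V₀ + A) t)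
    (hθ₁ : ∀ t : ℝ, 0 ≤ t → HasDerivAt θ₁ ((-θ₁ t + θinf (V₁ t)) / τ) t)
    (hV₂ : ∀ t : ℝ, 0 ≤ t → HasDerivAt V₂ (-V₂ t + V₀ + A) t)
    (hθ₂ : ∀ t : ℝ, 0 ≤ t → HasDerivAt θ₂ ((-θ₂ t + θinf (V₂ t)) / τ) t) :
    ∀ t : ℝ, 0 ≤ t →
      |V₁ t - V₂ t| = exp (-t) * |V₁ 0 - V₂ 0| ∧
      |θ₁ t - θ₂ t| ≤ exp (-t / τ) * (|θ₁ 0 - θ₂ 0| + L / (τ - 1) * |V₁ 0 - V₂ 0|) :=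
  threshold_model_contraction_general τ V₀ A L hτ θinf hLip V₁ θ₁ V₂ θ₂ hV₁ hθ₁ hV₂ hθ₂
end

section
/- Let τ_θ > 0, let θ_∞ : ℝ → ℝ be continuous, and let V_r ≤ V₀. Assume that θ_∞(V) − V + τ_θ(V − V₀) > 0 for every V ≥ V_r (this condition says that on the threshold line V = θ the unforced vector field points strictly into the subthreshold region, so in particular no trajectory can graze the threshold). Then every solution (V, θ) on [0,∞) of the unforced system V' = −V + V₀, τ_θ θ' = −θ + θ_∞(V) with V(0) ≥ V_r and V(0) < θ(0) remains subthreshold for all time: V_r ≤ V(t) < θ(t) for all t ≥ 0. -/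
open Real Set

/-
The voltage equation is linear and decouples: `eᵗ (V − V₀)` is constant, so `V` relaxes
monotonically from `V(0)` to `V₀` and never drops below `V_r`. For the gap `θ − V`, at any
time where it vanishes the field condition makes its derivative strictly positive; the fencing
theorem keeps the gap nonnegative, and a zero at a positive time would be an interior minimum
with nonzero derivative.
-/

theorem sub_eq_exp_neg_mul_of_hasDerivAt_relaxation {V : ℝ → ℝ} {c : ℝ}
    (hV : ∀ t, 0 ≤ t → HasDerivAt V (-V t + c) t) {t : ℝ} (ht : 0 ≤ t) :
    V t - c = exp (-t) * (V 0 - c) := by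
  have hderiv : ∀ u, 0 ≤ u → HasDerivAt (fun u => exp u * (V u - c)) 0 u := fun u hu =>
    ((hasDerivAt_exp u).mul ((hV u hu).sub_const c)).congr_deriv (by ring)
  have hconst := constant_of_has_deriv_right_zero
    (fun u hu => (hderiv u hu.1).continuousAt.continuousWithinAt)
    (fun u hu => (hderiv u hu.1).hasDerivWithinAt) t (right_mem_Icc.mpr ht)
  simp only [exp_zero, one_mul] at hconst
  rw [← hconst, ← mul_assoc, ← exp_add, neg_add_cancel, exp_zero, one_mul]

theorem le_of_hasDerivAt_relaxation {V : ℝ → ℝ} {c m : ℝ}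
    (hV : ∀ t, 0 ≤ t → HasDerivAt V (-V t + c) t) (h0 : m ≤ V 0) (hc : m ≤ c)
    {t : ℝ} (ht : 0 ≤ t) : m ≤ V t := by
  have hV_t := sub_eq_exp_neg_mul_of_hasDerivAt_relaxation hV ht
  have hexp_le : exp (-t) ≤ 1 := exp_le_one_iff.mpr (neg_nonpos.mpr ht)
  nlinarith [exp_pos (-t)]

theorem nonneg_of_hasDerivAt_of_zero_imp_deriv_pos {g g' : ℝ → ℝ} {a : ℝ}
    (hg : ∀ t, a ≤ t → HasDerivAt g (g' t) t) (ha : 0 ≤ g a)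
    (hcross : ∀ t, a ≤ t → g t = 0 → 0 < g' t) {t : ℝ} (ht : a ≤ t) : 0 ≤ g t := by
  have hfence := image_le_of_deriv_right_lt_deriv_boundary
    (f := fun u => -g u) (f' := fun u => -g' u) (B := fun _ => 0) (B' := fun _ => 0)
    (fun u hu => (hg u hu.1).neg.continuousAt.continuousWithinAt)
    (fun u hu => (hg u hu.1).neg.hasDerivWithinAt) (neg_nonpos.mpr ha)
    (fun _ => hasDerivAt_const _ _)
    (fun u hu hu0 => neg_neg_iff_pos.mpr (hcross u hu.1 (neg_eq_zero.mp hu0)))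
    (right_mem_Icc.mpr ht)
  exact neg_nonpos.mp hfence

theorem pos_of_hasDerivAt_of_zero_imp_deriv_pos {g g' : ℝ → ℝ} {a : ℝ}
    (hg : ∀ t, a ≤ t → HasDerivAt g (g' t) t) (ha : 0 < g a)
    (hcross : ∀ t, a ≤ t → g t = 0 → 0 < g' t) {t : ℝ} (ht : a ≤ t) : 0 < g t := by
  have hnonneg : ∀ u, a ≤ u → 0 ≤ g u := fun u hu =>
    nonneg_of_hasDerivAt_of_zero_imp_deriv_pos hg ha.le hcross hu
  refine (hnonneg t ht).lt_of_ne fun hzero => ?_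
  have hat : a < t := ht.lt_of_ne fun h => ha.ne' (h ▸ hzero.symm)
  have hmin : IsLocalMin g t :=
    Filter.mem_of_superset (Ioi_mem_nhds hat) fun u hu => hzero ▸ hnonneg u hu.le
  exact (hcross t ht hzero.symm).ne' (hmin.hasDerivAt_eq_zero (hg t ht))

theorem unforced_threshold_model_subthreshold_invariance_general (τ V₀ Vr : ℝ) (hτ : 0 < τ)
    (θinf : ℝ → ℝ) (hVr : Vr ≤ V₀)
    (hfield : ∀ V : ℝ, Vr ≤ V → 0 < θinf V - V + τ * (V - V₀))
    (V θ : ℝ → ℝ)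
    (hV : ∀ t : ℝ, 0 ≤ t → HasDerivAt V (-V t + V₀) t)
    (hθ : ∀ t : ℝ, 0 ≤ t → HasDerivAt θ ((-θ t + θinf (V t)) / τ) t)
    (h0 : Vr ≤ V 0) (h0' : V 0 < θ 0) :
    ∀ t : ℝ, 0 ≤ t → Vr ≤ V t ∧ V t < θ t := by
  have hVr_le : ∀ t, 0 ≤ t → Vr ≤ V t := fun t ht => le_of_hasDerivAt_relaxation hV h0 hVr ht
  have hcross : ∀ t, 0 ≤ t → θ t - V t = 0 →
      0 < (-θ t + θinf (V t)) / τ - (-V t + V₀) := fun t ht hgap => by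
    have hθV : θ t = V t := sub_eq_zero.mp hgap
    have hslope : (-θ t + θinf (V t)) / τ - (-V t + V₀)
        = (θinf (V t) - V t + τ * (V t - V₀)) / τ := by
      rw [hθV]; field_simp; ring
    exact hslope ▸ div_pos (hfield (V t) (hVr_le t ht)) hτ
  intro t ht
  exact ⟨hVr_le t ht, sub_pos.mp <| pos_of_hasDerivAt_of_zero_imp_deriv_pos
    (fun u hu => (hθ u hu).sub (hV u hu)) (sub_pos.mpr h0') hcross ht⟩

/-- If on the threshold line `V = θ` the unforced vector field points strictly into the
subthreshold region (i.e. `θ_∞(V) − V + τ_θ(V − V₀) > 0` for all `V ≥ V_r`), then every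
solution of the unforced system `V' = −V + V₀`, `τ_θ θ' = −θ + θ_∞(V)` starting in the
subthreshold domain `{V_r ≤ V, V < θ}` remains subthreshold for all `t ≥ 0`. -/
theorem unforced_threshold_model_subthreshold_invariance (τ V₀ Vr : ℝ) (hτ : 0 < τ)
    (θinf : ℝ → ℝ) (hcont : Continuous θinf) (hVr : Vr ≤ V₀)
    (hfield : ∀ V : ℝ, Vr ≤ V → 0 < θinf V - V + τ * (V - V₀))
    (V θ : ℝ → ℝ)
    (hV : ∀ t : ℝ, 0 ≤ t → HasDerivAt V (-V t + V₀) t)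
    (hθ : ∀ t : ℝ, 0 ≤ t → HasDerivAt θ ((-θ t + θinf (V t)) / τ) t)
    (h0 : Vr ≤ V 0) (h0' : V 0 < θ 0) :
    ∀ t : ℝ, 0 ≤ t → Vr ≤ V t ∧ V t < θ t :=
  unforced_threshold_model_subthreshold_invariance_general τ V₀ Vr hτ θinf hVr hfield V θ hV hθ h0
    h0'
end

section
/- Let τ_θ > 0, V₀, A ∈ ℝ, 0 < d < 1 and T > 0, let θ_∞ : ℝ → ℝ be Lipschitz, and let I : ℝ → ℝ be the T-periodic square wave with I(t) = A for t ∈ (nT, nT + dT] and I(t) = 0 for t ∈ (nT + dT, (n+1)T], n ∈ ℤ. Then the periodically forced system V' = −V + V₀ + I(t), τ_θ θ' = −θ + θ_∞(V) has exactly one T-periodic solution; more precisely, there is exactly one continuous pair (V, θ) : ℝ → ℝ² which satisfies V' = −V + V₀ + A, τ_θ θ' = −θ + θ_∞(V) on each open interval (nT, nT + dT) and V' = −V + V₀, τ_θ θ' = −θ + θ_∞(V) on each open interval (nT + dT, (n+1)T), and which satisfies V(t+T) = V(t) and θ(t+T) = θ(t) for all t. -/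
/-!
Both equations are linear of the form `τ x' = -x + g t` with a `T`-periodic, locally integrable
forcing `g`: first for `V` with `g = V₀ + I`, then for `θ` with `g = θ_∞ ∘ V`. Variation of
constants gives a continuous solution, `T`-periodic for the right initial value, which solves the
equation wherever `g` is continuous. If `w` is the difference of two periodic solutions, then
`w t * exp (t / τ)` is continuous with derivative `0` off the countable set of switching times,
hence constant, and periodicity forces the constant to be `0`.
-/

open Real Set Function MeasureTheory

theorem MeasureTheory.LocallyIntegrable.intervalIntegrable {E : Type*} [NormedAddCommGroup E]
    {f : ℝ → E} (hf : LocallyIntegrable f) (a b : ℝ) : IntervalIntegrable f volume a b :=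
  (hf.integrableOn_isCompact isCompact_uIcc).intervalIntegrable

section LinearPeriodicODE

variable {τ T : ℝ} {g : ℝ → ℝ}

noncomputable def weightedPrimitive (τ : ℝ) (g : ℝ → ℝ) (t : ℝ) : ℝ :=
  ∫ s in (0 : ℝ)..t, exp (s / τ) * g s

theorem locallyIntegrable_exp_div_mul (hg : LocallyIntegrable g) :
    LocallyIntegrable fun s => exp (s / τ) * g s :=
  hg.continuous_mul (by fun_prop)

theorem continuous_weightedPrimitive (hg : LocallyIntegrable g) :
    Continuous (weightedPrimitive τ g) :=
  intervalIntegral.continuous_primitive (locallyIntegrable_exp_div_mul hg).intervalIntegrable 0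

theorem hasDerivAt_weightedPrimitive (hg : LocallyIntegrable g) {t : ℝ} (hgt : ContinuousAt g t) :
    HasDerivAt (weightedPrimitive τ g) (exp (t / τ) * g t) t :=
  intervalIntegral.integral_hasDerivAt_right
    ((locallyIntegrable_exp_div_mul hg).intervalIntegrable _ _)
    (locallyIntegrable_exp_div_mul hg).aestronglyMeasurable.stronglyMeasurableAtFilter
    (by fun_prop)

theorem weightedPrimitive_add_period (hg : LocallyIntegrable g) (hgT : Periodic g T) (t : ℝ) :
    weightedPrimitive τ g (t + T) =
      weightedPrimitive τ g T + exp (T / τ) * weightedPrimitive τ g t := by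
  have hint := (locallyIntegrable_exp_div_mul (τ := τ) hg).intervalIntegrable
  have hshift :
      ∫ s in T..t + T, exp (s / τ) * g s = exp (T / τ) * weightedPrimitive τ g t := by
    calc ∫ s in T..t + T, exp (s / τ) * g s
        = ∫ s in (0 : ℝ)..t, exp ((s + T) / τ) * g (s + T) := by
          rw [intervalIntegral.integral_comp_add_right (fun s => exp (s / τ) * g s), zero_add]
      _ = ∫ s in (0 : ℝ)..t, exp (T / τ) * (exp (s / τ) * g s) :=
          intervalIntegral.integral_congr fun s _ => by
            simp only [hgT s, add_div, exp_add]
            ring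
      _ = exp (T / τ) * weightedPrimitive τ g t := intervalIntegral.integral_const_mul _ _
  rw [← hshift, weightedPrimitive, weightedPrimitive,
    intervalIntegral.integral_add_adjacent_intervals (hint _ _) (hint _ _)]

/-- Variation of constants `x t = exp (-t/τ) (x 0 + weightedPrimitive τ g t / τ)`, with `x 0`
the solution of `x 0 = x T = exp (-T/τ) (x 0 + weightedPrimitive τ g T / τ)`. -/
noncomputable def periodicSolution (τ T : ℝ) (g : ℝ → ℝ) (t : ℝ) : ℝ :=
  exp (-(t / τ)) * (exp (-(T / τ)) * weightedPrimitive τ g T / τ / (1 - exp (-(T / τ))) +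
    weightedPrimitive τ g t / τ)

theorem continuous_periodicSolution (hg : LocallyIntegrable g) :
    Continuous (periodicSolution τ T g) := by
  have := continuous_weightedPrimitive (τ := τ) hg
  unfold periodicSolution
  fun_prop

theorem hasDerivAt_periodicSolution (hg : LocallyIntegrable g) {t : ℝ} (hgt : ContinuousAt g t) :
    HasDerivAt (periodicSolution τ T g) ((-periodicSolution τ T g t + g t) / τ) t := by
  have hexp : exp (-(t / τ)) * exp (t / τ) = 1 := by rw [← exp_add, neg_add_cancel, exp_zero]
  have h := ((hasDerivAt_id t).div_const τ).neg.exp.mul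
    (((hasDerivAt_weightedPrimitive (τ := τ) hg hgt).div_const τ).const_add
      (exp (-(T / τ)) * weightedPrimitive τ g T / τ / (1 - exp (-(T / τ)))))
  refine h.congr_deriv ?_
  unfold periodicSolution
  simp only [id]
  linear_combination (g t / τ) * hexp

theorem periodic_periodicSolution (hTτ : T / τ ≠ 0) (hg : LocallyIntegrable g)
    (hgT : Periodic g T) : Periodic (periodicSolution τ T g) T := by
  intro t
  set E := exp (-(T / τ))
  set c := E * weightedPrimitive τ g T / τ / (1 - E)
  have hc : c * (1 - E) = E * weightedPrimitive τ g T / τ :=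
    div_mul_cancel₀ _ (sub_ne_zero.2 fun h => hTτ (by simpa [E] using h.symm))
  have hE : E * exp (T / τ) = 1 := by rw [← exp_add, neg_add_cancel, exp_zero]
  have hexp : exp (-((t + T) / τ)) = exp (-(t / τ)) * E := by rw [← exp_add]; ring_nf
  simp only [periodicSolution, weightedPrimitive_add_period hg hgT, hexp]
  linear_combination (exp (-(t / τ)) * weightedPrimitive τ g t / τ) * hE - exp (-(t / τ)) * hc

theorem eq_zero_of_periodic_of_hasDerivAt (hTτ : T / τ ≠ 0) {s : Set ℝ} (hs : s.Countable)
    {f : ℝ → ℝ} (hf : Continuous f) (hfT : Periodic f T)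
    (hf' : ∀ t ∉ s, HasDerivAt f (-f t / τ) t) : f = 0 := by
  set w := fun t => f t * exp (t / τ)
  have hw : ∀ t, w t = w 0 := fun t => by
    have h := integral_eq_of_hasDerivAt_off_countable (a := 0) (b := t) w 0 hs (by fun_prop)
      (fun u hu => ((hf' u hu.2).mul ((hasDerivAt_id u).div_const τ).exp).congr_deriv
        (by simp only [Pi.zero_apply, id]; ring)) intervalIntegrable_const
    simp only [Pi.zero_apply, intervalIntegral.integral_zero] at h
    linarith
  have hf0 : f 0 = 0 := by
    have h : f T * exp (T / τ) = f 0 * exp (0 / τ) := hw T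
    rw [show f T = f 0 by simpa using hfT 0, zero_div, exp_zero, mul_one] at h
    exact (mul_right_eq_self₀.1 h).resolve_left fun h' => hTτ (exp_eq_one_iff _ |>.1 h')
  funext t
  simpa [w, hf0, exp_ne_zero] using hw t

end LinearPeriodicODE

/-- For `T > 0`, `Int.fract (t / T) ∈ Ioc 0 d` iff `t ∈ (nT, nT + dT]` for some `n : ℤ`. -/
noncomputable def squareWave (A d T : ℝ) : ℝ → ℝ :=
  {t | Int.fract (t / T) ∈ Ioc 0 d}.indicator fun _ => A

def switchingTimes (T d : ℝ) : Set ℝ :=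
  range (fun n : ℤ => n * T) ∪ range fun n : ℤ => n * T + d * T

section SquareWave

variable {A d T : ℝ}

theorem locallyIntegrable_squareWave : LocallyIntegrable (squareWave A d T) :=
  (locallyIntegrable_const A).indicator
    (measurableSet_Ioc.preimage (measurable_fract.comp (measurable_id.div_const T)))

theorem periodic_squareWave (hT : T ≠ 0) : Periodic (squareWave A d T) T := fun t => by
  simp only [squareWave, indicator_apply, mem_ofPred_eq, add_div, div_self hT, Int.fract_add_one]

theorem fract_div_eq_of_mem_Ico (hT : 0 < T) {n : ℤ} {t : ℝ}
    (ht : t ∈ Ico (n * T) ((n + 1) * T)) : Int.fract (t / T) = t / T - n := by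
  refine Int.fract_eq_iff.2 ⟨sub_nonneg.2 ((le_div_iff₀ hT).2 ht.1), ?_, n, by ring⟩
  rw [sub_lt_iff_lt_add', div_lt_iff₀ hT]
  exact ht.2

theorem squareWave_eqOn_Ioo_on (hd1 : d ≤ 1) (hT : 0 < T) (n : ℤ) :
    EqOn (squareWave A d T) (fun _ => A) (Ioo (n * T) (n * T + d * T)) := by
  intro t ht
  have hfract : Int.fract (t / T) = t / T - n :=
    fract_div_eq_of_mem_Ico hT ⟨ht.1.le, by nlinarith [ht.2]⟩
  refine indicator_of_mem (s := {t | Int.fract (t / T) ∈ Ioc 0 d}) ?_ _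
  show Int.fract (t / T) ∈ Ioc 0 d
  rw [hfract, mem_Ioc, sub_pos, sub_le_iff_le_add', lt_div_iff₀ hT, div_le_iff₀ hT]
  constructor <;> linarith [ht.1, ht.2]

theorem squareWave_eqOn_Ioo_off (hd0 : 0 ≤ d) (hT : 0 < T) (n : ℤ) :
    EqOn (squareWave A d T) (fun _ => 0) (Ioo (n * T + d * T) ((n + 1) * T)) := by
  intro t ht
  have hfract : Int.fract (t / T) = t / T - n :=
    fract_div_eq_of_mem_Ico hT ⟨by nlinarith [ht.1], ht.2⟩
  refine indicator_of_notMem (s := {t | Int.fract (t / T) ∈ Ioc 0 d}) (fun h => ?_) _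
  change Int.fract (t / T) ∈ Ioc 0 d at h
  rw [hfract, mem_Ioc, sub_le_iff_le_add', div_le_iff₀ hT] at h
  linarith [ht.1, h.2]

theorem countable_switchingTimes : (switchingTimes T d).Countable :=
  (countable_range _).union (countable_range _)

theorem exists_mem_Ioo_of_notMem_switchingTimes (hT : 0 < T) {t : ℝ}
    (ht : t ∉ switchingTimes T d) :
    ∃ n : ℤ, t ∈ Ioo (n * T) (n * T + d * T) ∨ t ∈ Ioo (n * T + d * T) ((n + 1) * T) := by
  obtain ⟨hn, hn'⟩ : (⌊t / T⌋ : ℝ) * T ≤ t ∧ t < (⌊t / T⌋ + 1) * T :=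
    ⟨(le_div_iff₀ hT).1 (Int.floor_le _), (div_lt_iff₀ hT).1 (Int.lt_floor_add_one _)⟩
  have hne : (⌊t / T⌋ : ℝ) * T ≠ t := fun h => ht (Or.inl ⟨_, h⟩)
  have hne' : (⌊t / T⌋ : ℝ) * T + d * T ≠ t := fun h => ht (Or.inr ⟨_, h⟩)
  refine ⟨⌊t / T⌋, ?_⟩
  rcases lt_or_gt_of_ne hne' with h | h
  · exact Or.inr ⟨h, hn'⟩
  · exact Or.inl ⟨lt_of_le_of_ne hn hne, h⟩

theorem forall_notMem_switchingTimes_of_forall_Ioo {P : ℝ → ℝ → Prop} (hd0 : 0 ≤ d)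
    (hd1 : d ≤ 1) (hT : 0 < T) (hon : ∀ n : ℤ, ∀ t ∈ Ioo (n * T) (n * T + d * T), P t A)
    (hoff : ∀ n : ℤ, ∀ t ∈ Ioo (n * T + d * T) ((n + 1) * T), P t 0) :
    ∀ t ∉ switchingTimes T d, P t (squareWave A d T t) := by
  intro t ht
  obtain ⟨n, h | h⟩ := exists_mem_Ioo_of_notMem_switchingTimes hT ht
  · rw [squareWave_eqOn_Ioo_on hd1 hT n h]
    exact hon n t h
  · rw [squareWave_eqOn_Ioo_off hd0 hT n h]
    exact hoff n t h

end SquareWave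

noncomputable def forcedVoltage (V₀ A d T : ℝ) : ℝ → ℝ :=
  periodicSolution 1 T fun t => V₀ + squareWave A d T t

section ForcedVoltage

variable {V₀ A d T : ℝ}

theorem locallyIntegrable_const_add_squareWave :
    LocallyIntegrable fun t => V₀ + squareWave A d T t :=
  (locallyIntegrable_const V₀).add locallyIntegrable_squareWave

theorem continuous_forcedVoltage : Continuous (forcedVoltage V₀ A d T) :=
  continuous_periodicSolution locallyIntegrable_const_add_squareWave

theorem periodic_forcedVoltage (hT : T ≠ 0) : Periodic (forcedVoltage V₀ A d T) T :=
  periodic_periodicSolution (by rwa [div_one]) locallyIntegrable_const_add_squareWave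
    fun t => congrArg (V₀ + ·) (periodic_squareWave hT t)

theorem hasDerivAt_forcedVoltage_of_eqOn {a : ℝ} {U : Set ℝ} (hU : IsOpen U)
    (hI : EqOn (squareWave A d T) (fun _ => a) U) {t : ℝ} (ht : t ∈ U) :
    HasDerivAt (forcedVoltage V₀ A d T) (-forcedVoltage V₀ A d T t + V₀ + a) t := by
  have hIt : ContinuousAt (squareWave A d T) t :=
    (hI.eventuallyEq_of_mem (hU.mem_nhds ht)).continuousAt
  refine (hasDerivAt_periodicSolution locallyIntegrable_const_add_squareWave
    (continuousAt_const.add hIt)).congr_deriv ?_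
  rw [hI ht, forcedVoltage]
  ring

end ForcedVoltage

/-- The periodically forced threshold model `V' = −V + V₀ + I(t)`, `τ_θ θ' = −θ + θ_∞(V)`,
with `I` the `T`-periodic square wave of amplitude `A` and duty cycle `d ∈ (0,1)`, has
exactly one `T`-periodic solution: there is exactly one continuous pair `(V, θ)` that
solves the system with input `A` on each interval `(nT, nT + dT)` and with input `0` on
each interval `(nT + dT, (n+1)T)`, and is `T`-periodic. -/
theorem forced_threshold_model_unique_periodic_solution
    (τ V₀ A d T : ℝ) (hτ : 0 < τ) (hd0 : 0 < d) (hd1 : d < 1) (hT : 0 < T)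
    (θinf : ℝ → ℝ) (K : NNReal) (hLip : LipschitzWith K θinf) :
    ∃! p : (ℝ → ℝ) × (ℝ → ℝ),
      Continuous p.1 ∧ Continuous p.2 ∧
      (∀ n : ℤ, ∀ t ∈ Ioo ((n : ℝ) * T) ((n : ℝ) * T + d * T),
        HasDerivAt p.1 (-p.1 t + V₀ + A) t ∧
        HasDerivAt p.2 ((-p.2 t + θinf (p.1 t)) / τ) t) ∧
      (∀ n : ℤ, ∀ t ∈ Ioo ((n : ℝ) * T + d * T) (((n : ℝ) + 1) * T),
        HasDerivAt p.1 (-p.1 t + V₀) t ∧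
        HasDerivAt p.2 ((-p.2 t + θinf (p.1 t)) / τ) t) ∧
      (∀ t : ℝ, p.1 (t + T) = p.1 t ∧ p.2 (t + T) = p.2 t) := by
  set V := forcedVoltage V₀ A d T
  have hVT : Periodic V T := periodic_forcedVoltage hT.ne'
  have hg : Continuous fun t => θinf (V t) := hLip.continuous.comp continuous_forcedVoltage
  set Θ := periodicSolution τ T fun t => θinf (V t)
  have hTτ : T / τ ≠ 0 := (div_pos hT hτ).ne'
  have hΘT : Periodic Θ T := periodic_periodicSolution hTτ hg.locallyIntegrable (hVT.comp θinf)
  have hΘ : ∀ t, HasDerivAt Θ ((-Θ t + θinf (V t)) / τ) t := fun t =>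
    hasDerivAt_periodicSolution hg.locallyIntegrable hg.continuousAt
  have hVon :
      ∀ n : ℤ, ∀ t ∈ Ioo (n * T) (n * T + d * T), HasDerivAt V (-V t + V₀ + A) t :=
    fun n _ => hasDerivAt_forcedVoltage_of_eqOn isOpen_Ioo (squareWave_eqOn_Ioo_on hd1.le hT n)
  have hVoff :
      ∀ n : ℤ, ∀ t ∈ Ioo (n * T + d * T) ((n + 1) * T), HasDerivAt V (-V t + V₀) t :=
    fun n t ht => by
      simpa using hasDerivAt_forcedVoltage_of_eqOn isOpen_Ioo
        (squareWave_eqOn_Ioo_off hd0.le hT n) ht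
  refine ⟨(V, Θ), ⟨continuous_forcedVoltage, continuous_periodicSolution hg.locallyIntegrable,
    fun n t ht => ⟨hVon n t ht, hΘ t⟩, fun n t ht => ⟨hVoff n t ht, hΘ t⟩,
    fun t => ⟨hVT t, hΘT t⟩⟩, ?_⟩
  rintro ⟨x, θ⟩ ⟨hx, hθ, hon, hoff, hper⟩
  have hsol := forall_notMem_switchingTimes_of_forall_Ioo
    (P := fun t a => HasDerivAt x (-x t + V₀ + a) t ∧
      HasDerivAt θ ((-θ t + θinf (x t)) / τ) t) hd0.le hd1.le hT hon (by simpa using hoff)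
  have hVsol := forall_notMem_switchingTimes_of_forall_Ioo
    (P := fun t a => HasDerivAt V (-V t + V₀ + a) t) hd0.le hd1.le hT hVon (by simpa using hVoff)
  obtain rfl : x = V := sub_eq_zero.1 <| eq_zero_of_periodic_of_hasDerivAt (τ := 1)
    (by simpa using hT.ne') countable_switchingTimes (hx.sub continuous_forcedVoltage)
    (Periodic.sub (fun t => (hper t).1) hVT)
    fun t ht => ((hsol t ht).1.sub (hVsol t ht)).congr_deriv (by simp only [Pi.sub_apply]; ring)
  obtain rfl : θ = Θ := sub_eq_zero.1 <| eq_zero_of_periodic_of_hasDerivAt hTτ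
    countable_switchingTimes (hθ.sub (continuous_periodicSolution hg.locallyIntegrable))
    (Periodic.sub (fun t => (hper t).2) hΘT)
    fun t ht => ((hsol t ht).2.sub (hΘ t)).congr_deriv (by simp only [Pi.sub_apply]; ring)
  rfl
end
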